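/- Let i ≥ 1 and let w be a homogeneous squarefree polynomial of degree i+1 in R[x_1, x_{-1}, ..., x_n, x_{-n}] such that for every variable x_v, the partial derivative ∂w/∂x_v is a polynomial in the variables y_k = x_k + x_{-k}. Then w itself is symmetric under the involution swapping x_k and x_{-k}, and hence w is a squarefree polynomial in y_1, ..., y_n, expressible as a linear combination of products ∏_{k∈σ}(x_k + x_{-k}) over (i+1)-element subsets σ ⊆ {1,...,n}. -/

import Mathlib

/-!
The operator `∂_{x_k} - ∂_{x_{-k}}` kills every polynomial in the `y`'s and commutes with all
partial derivatives, so `g = (∂_{x_k} - ∂_{x_{-k}}) w` has vanishing partial derivatives. As `g`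
is homogeneous of degree `i ≥ 1`, Euler's identity forces `g = 0`. Euler's identity for `w` then
reads `(i + 1) w = ∑ₖ yₖ ∂_{x_k} w`, a polynomial `Q(y)` in the `y`'s, hence symmetric. Setting
every `x_{-k}` to zero recovers `Q` from `w`, so `Q` inherits homogeneity and squarefreeness, and
is therefore a combination of products of `i + 1` distinct variables.
-/

open MvPolynomial

namespace MvPolynomial

variable {σ R : Type*}

theorem pderiv_pderiv_comm [CommRing R] (u v : σ) (p : MvPolynomial σ R) :
    pderiv u (pderiv v p) = pderiv v (pderiv u p) := by
  classical
  have h : ⁅pderiv u, pderiv v⁆ = (0 : Derivation R (MvPolynomial σ R) (MvPolynomial σ R)) :=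
    derivation_ext fun i => by
      rw [Derivation.commutator_apply, Derivation.zero_apply]
      simp only [pderiv_X, Pi.single_apply]
      split_ifs <;> simp
  rw [← sub_eq_zero, ← Derivation.commutator_apply, h, Derivation.zero_apply]

variable (σ R) in
/-- `sumPairs σ R P = P(y)`, where the variable `(k, true)` stands for `x_k`, `(k, false)` for
`x_{-k}`, and `y_k = x_k + x_{-k}`. -/
noncomputable def sumPairs [CommSemiring R] : MvPolynomial σ R →ₐ[R] MvPolynomial (σ × Bool) R :=
  aeval fun k => X (k, true) + X (k, false)

section CommSemiring
variable [CommSemiring R]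

@[simp]
theorem sumPairs_X (k : σ) : sumPairs σ R (X k) = X (k, true) + X (k, false) := aeval_X _ _

theorem pderiv_true_sumPairs (k : σ) (P : MvPolynomial σ R) :
    pderiv (k, true) (sumPairs σ R P) = pderiv (k, false) (sumPairs σ R P) := by
  classical
  induction P using MvPolynomial.induction_on with
  | C a => simp [sumPairs]
  | add p q hp hq => simp only [map_add, hp, hq]
  | mul_X p j hp =>
    simp only [map_mul, pderiv_mul, hp, sumPairs_X, map_add, pderiv_X, Pi.single_apply,
      Prod.mk.injEq]
    by_cases hj : j = k <;> simp [hj]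

theorem rename_swap_sumPairs (P : MvPolynomial σ R) :
    rename (fun v : σ × Bool => (v.1, !v.2)) (sumPairs σ R P) = sumPairs σ R P := by
  suffices h : (rename fun v : σ × Bool => (v.1, !v.2)).comp (sumPairs σ R) = sumPairs σ R from
    congr($h P)
  exact algHom_ext fun k => by simp [add_comm]

theorem killCompl_sumPairs (P : MvPolynomial σ R) :
    killCompl (Prod.mk_left_injective true) (sumPairs σ R P) = P := by
  suffices h : (killCompl (Prod.mk_left_injective true)).comp (sumPairs σ R) = AlgHom.id R _ from
    congr($h P)
  refine algHom_ext fun k => ?_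
  have hfalse : killCompl (R := R) (Prod.mk_left_injective true) (X (k, false)) = 0 := by
    rw [X, killCompl_monomial_eq_zero_of_notMem_range _ _
      ((Finsupp.mem_support_single _ _ _).2 ⟨rfl, one_ne_zero⟩)]
    simp
  rw [AlgHom.comp_apply, sumPairs_X, map_add, hfalse, ← rename_X (fun k : σ => (k, true)),
    killCompl_rename_app, add_zero, AlgHom.id_apply]

end CommSemiring

section Field
variable {K : Type*} [Field K] [CharZero K] [Fintype σ] {d : ℕ} {w : MvPolynomial (σ × Bool) K}

theorem pderiv_true_eq_pderiv_false (hw : w.IsHomogeneous d) (hd : 2 ≤ d)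
    (h : ∀ v, ∃ P, pderiv v w = sumPairs σ K P) (k : σ) :
    pderiv (k, true) w = pderiv (k, false) w := by
  set g := pderiv (k, true) w - pderiv (k, false) w
  have hg : ∀ v, pderiv v g = 0 := fun v => by
    obtain ⟨P, hP⟩ := h v
    rw [map_sub, pderiv_pderiv_comm v, pderiv_pderiv_comm v, hP, pderiv_true_sumPairs, sub_self]
  have hgd : g.IsHomogeneous (d - 1) := hw.pderiv.sub hw.pderiv
  have euler := hgd.sum_X_mul_pderiv
  simp only [hg, mul_zero, Finset.sum_const_zero] at euler
  exact sub_eq_zero.mp ((smul_eq_zero.mp euler.symm).resolve_left (by omega))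

theorem exists_eq_sumPairs_of_pderiv (hw : w.IsHomogeneous d) (hd : 2 ≤ d)
    (h : ∀ v, ∃ P, pderiv v w = sumPairs σ K P) : ∃ Q, w = sumPairs σ K Q := by
  have hsym := pderiv_true_eq_pderiv_false hw hd h
  choose P hP using h
  have hpair : ∀ k, X (k, true) * pderiv (k, true) w + X (k, false) * pderiv (k, false) w =
      sumPairs σ K (X k * P (k, true)) := fun k => by
    rw [← hsym k, ← add_mul, map_mul, sumPairs_X, hP]
  have euler := hw.sum_X_mul_pderiv
  simp only [Fintype.sum_prod_type, Fintype.sum_bool, hpair, ← map_sum] at euler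
  refine ⟨(d : K)⁻¹ • ∑ k, X k * P (k, true), ?_⟩
  rw [map_smul, euler, ← Nat.cast_smul_eq_nsmul K, smul_smul,
    inv_mul_cancel₀ (Nat.cast_ne_zero.2 (by omega)), one_smul]

end Field

section Squarefree
variable [CommSemiring R] {d : ℕ}

theorem IsHomogeneous.killCompl {τ : Type*} {f : σ → τ} (hf : Function.Injective f)
    {p : MvPolynomial τ R} (hp : p.IsHomogeneous d) : (killCompl hf p).IsHomogeneous d := by
  intro s hs
  rw [coeff_killCompl] at hs
  have h := hp hs
  rw [Pi.one_def, ← Finsupp.degree_eq_weight_one, Finsupp.degree_mapDomain] at h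
  rwa [Pi.one_def, ← Finsupp.degree_eq_weight_one]

theorem le_one_of_mem_support_killCompl {τ : Type*} {f : σ → τ} (hf : Function.Injective f)
    {p : MvPolynomial τ R} (hp : ∀ m ∈ p.support, ∀ v, m v ≤ 1) :
    ∀ m ∈ (killCompl hf p).support, ∀ v, m v ≤ 1 := by
  intro m hm v
  rw [mem_support_iff, coeff_killCompl] at hm
  simpa [Finsupp.mapDomain_apply hf] using hp _ (mem_support_iff.2 hm) (f v)

theorem prod_X_eq_monomial_toFinsupp [DecidableEq σ] (s : Finset σ) :
    ∏ k ∈ s, X k = monomial (Multiset.toFinsupp s.val) (1 : R) := by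
  rw [← prod_X_pow_eq_monomial, Multiset.toFinsupp_support, Finset.val_toFinset]
  exact Finset.prod_congr rfl fun k hk => by
    rw [Multiset.toFinsupp_apply, Multiset.count_eq_one_of_mem s.nodup hk, pow_one]

theorem _root_.Finsupp.toFinsupp_support_val_of_le_one [DecidableEq σ] {m : σ →₀ ℕ}
    (hm : ∀ v, m v ≤ 1) :
    Multiset.toFinsupp m.support.val = m := by
  ext v
  rw [Multiset.toFinsupp_apply, Multiset.count_eq_of_nodup m.support.nodup]
  simp only [Finset.mem_val, Finsupp.mem_support_iff]
  have := hm v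
  split_ifs <;> omega

theorem eq_sum_powersetCard_of_le_one [Fintype σ] [DecidableEq σ] {p : MvPolynomial σ R}
    (hp : p.IsHomogeneous d) (hsf : ∀ m ∈ p.support, ∀ v, m v ≤ 1) :
    p = ∑ s ∈ Finset.univ.powersetCard d, coeff (Multiset.toFinsupp s.val) p • ∏ k ∈ s, X k := by
  ext m
  simp only [coeff_sum, coeff_smul, prod_X_eq_monomial_toFinsupp, coeff_monomial, smul_eq_mul,
    mul_ite, mul_one, mul_zero]
  by_cases hm : m ∈ p.support
  · have hm1 := Finsupp.toFinsupp_support_val_of_le_one (hsf m hm)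
    have hcard : m.support.card = d := by
      rw [hp.degree_eq_sum_deg_support hm, Finset.card_eq_sum_ones]
      exact Finset.sum_congr rfl fun v hv =>
        (le_antisymm (hsf m hm v) (Nat.one_le_iff_ne_zero.2 (Finsupp.mem_support_iff.1 hv))).symm
    rw [Finset.sum_eq_single_of_mem m.support
      (Finset.mem_powersetCard.2 ⟨Finset.subset_univ _, hcard⟩), if_pos hm1, hm1]
    intro s _ hs
    exact if_neg fun h =>
      hs (Finset.val_injective (Multiset.toFinsupp.injective (h.trans hm1.symm)))
  · rw [notMem_support_iff.1 hm]
    refine (Finset.sum_eq_zero fun s _ => ?_).symm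
    split_ifs with h
    · rw [h, notMem_support_iff.1 hm]
    · rfl

end Squarefree

end MvPolynomial

/-- if `w` is a homogeneous squarefree polynomial of degree `i+1`
(`i ≥ 1`) all of whose partial derivatives are polynomials in the variables
`y_k = x_k + x_{-k}`, then `w` is symmetric and is a linear combination of
products `∏_{k ∈ σ} (x_k + x_{-k})` over `(i+1)`-element subsets. -/
theorem stmt_2 (n i : ℕ) (hi : 1 ≤ i) (w : MvPolynomial (Fin n × Bool) ℝ)
    (hhom : w.IsHomogeneous (i + 1))
    (hsf : ∀ m ∈ w.support, ∀ v, m v ≤ 1)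
    (hd : ∀ v : Fin n × Bool, ∃ P : MvPolynomial (Fin n) ℝ,
      pderiv v w =
        aeval (fun k : Fin n => (X (k, true) + X (k, false) : MvPolynomial (Fin n × Bool) ℝ)) P) :
    rename (fun v : Fin n × Bool => (v.1, !v.2)) w = w ∧
    ∃ c : Finset (Fin n) → ℝ,
      w = ∑ σ ∈ (Finset.univ : Finset (Fin n)).powersetCard (i + 1),
        c σ • ∏ k ∈ σ, (X (k, true) + X (k, false)) := by
  obtain ⟨Q, rfl⟩ := exists_eq_sumPairs_of_pderiv hhom (by omega) hd
  refine ⟨rename_swap_sumPairs Q, fun s => coeff (Multiset.toFinsupp s.val) Q, ?_⟩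
  have hQ := killCompl_sumPairs Q
  have hQhom : Q.IsHomogeneous (i + 1) := hQ ▸ hhom.killCompl _
  have hQsf : ∀ m ∈ Q.support, ∀ v, m v ≤ 1 := hQ ▸ le_one_of_mem_support_killCompl _ hsf
  conv_lhs => rw [eq_sum_powersetCard_of_le_one hQhom hQsf]
  simp only [map_sum, map_smul, map_prod, sumPairs_X]
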